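/- Every eigenvalue of the adjacency matrix of a threshold graph that is strictly less than −1 is in fact strictly less than (−1−√2)/2. -/

import Mathlib

/-- A graph is a threshold graph if adjacency is determined by vertex weights
exceeding a threshold. -/
def SimpleGraph.IsThreshold {V : Type*} (G : SimpleGraph V) : Prop :=
  ∃ (S : ℝ) (w : V → ℝ), ∀ u v : V, u ≠ v → (G.Adj u v ↔ S < w u + w v)

/-- `μ` is an eigenvalue of the adjacency matrix of `G`. -/
def SimpleGraph.HasAdjEigenvalue {V : Type*} [Fintype V] (G : SimpleGraph V) (μ : ℝ) : Prop :=
  letI := Classical.decEq V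
  letI : DecidableRel G.Adj := Classical.decRel _
  ∃ x : V → ℝ, x ≠ 0 ∧ (G.adjMatrix ℝ).mulVec x = μ • x

/-!
A threshold graph can be dismantled one vertex at a time, since every nonempty vertex set `R`
contains a vertex that is isolated or dominating in `R`. Follow the solutions of
`A_R y + c 𝟙 = μ y` along the way. For `μ` in the range in question they are determined by `c`,
and `∑_R y = f c` for a constant `f`. Adding an isolated vertex changes `f` to `f + 1/μ`, and
adding a dominating one changes it to `((μ + 2) f + 1) / (μ - f)`. The pole `f = μ` of the second
map is exactly the case where `μ` becomes an eigenvalue.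

In the coordinate `z = f + 1` the two maps are the parabolic translations `z ↦ z + 1/μ` and
`1/z ↦ 1/z - 1/(μ + 1)`. The product of their lengths is `1/(μ² + μ)`, which is at least `4` when
`(-1 - √2)/2 ≤ μ < -1`. The maps then play ping-pong on the half-lines `z ≤ 1/(2μ)` and
`0 < z ≤ -2(μ + 1)`, and neither half-line contains the pole `z = μ + 1`.
-/

open Finset

theorem sq_add_self_le_quarter {μ : ℝ} (hlow : (-1 - √2) / 2 ≤ μ) (hup : μ ≤ -1 / 2) :
    μ ^ 2 + μ ≤ 1 / 4 := by
  have h2 : √2 ^ 2 = 2 := Real.sq_sqrt (by norm_num)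
  nlinarith [mul_nonneg (show 0 ≤ 2 * μ + 1 + √2 by linarith) (show 0 ≤ -(2 * μ + 1) by linarith)]

section PingPong

variable {μ f : ℝ}

-- In the coordinate `z = f + 1`: the value `z = 1` of the empty graph and the two half-lines.
def pingPongRegion (μ : ℝ) : Set ℝ :=
  {f | f = 0 ∨ (-1 < f ∧ f ≤ -2 * μ - 3) ∨ 1 ≤ 2 * μ * (f + 1)}

theorem add_inv_mem_pingPongRegion (hμ : μ < -1) (hμ' : μ ^ 2 + μ ≤ 1 / 4)
    (hf : f ∈ pingPongRegion μ) : f + μ⁻¹ ∈ pingPongRegion μ := by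
  have hinv : μ * μ⁻¹ = 1 := mul_inv_cancel₀ (by linarith)
  have hneg : μ⁻¹ < 0 := inv_lt_zero.2 (by linarith)
  rcases hf with rfl | ⟨hf1, hf2⟩ | hf
  · exact Or.inr (Or.inl ⟨by nlinarith, by nlinarith⟩)
  · exact Or.inr (Or.inr (by nlinarith))
  · exact Or.inr (Or.inr (by nlinarith))

theorem ne_of_mem_pingPongRegion (hμ : μ < -1) (hμ' : μ ^ 2 + μ ≤ 1 / 4)
    (hf : f ∈ pingPongRegion μ) : f ≠ μ := by
  rintro rfl
  rcases hf with h | ⟨h, -⟩ | h <;> nlinarith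

theorem moebius_mem_pingPongRegion (hμ : μ < -1) (hμ' : μ ^ 2 + μ ≤ 1 / 4)
    (hf : f ∈ pingPongRegion μ) : ((μ + 2) * f + 1) / (μ - f) ∈ pingPongRegion μ := by
  set g := ((μ + 2) * f + 1) / (μ - f)
  have hne : μ - f ≠ 0 := sub_ne_zero.2 (ne_of_mem_pingPongRegion hμ hμ' hf).symm
  have hg : g * (μ - f) = (μ + 2) * f + 1 := div_mul_cancel₀ _ hne
  refine Or.inr (Or.inl ?_)
  rcases hf with rfl | ⟨hf1, hf2⟩ | hf
  · constructor <;> nlinarith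
  · have hpos : 0 < f - μ := by linarith
    constructor <;> nlinarith
  · have hpos : 0 < μ - f := by nlinarith
    constructor <;> nlinarith

end PingPong

namespace SimpleGraph

variable {V : Type*} {G : SimpleGraph V}

theorem IsThreshold.exists_isolated_or_dominating (hG : G.IsThreshold) {R : Finset V}
    (hR : R.Nonempty) :
    ∃ v ∈ R, (∀ u ∈ R, ¬ G.Adj v u) ∨ (∀ u ∈ R, u ≠ v → G.Adj v u) := by
  obtain ⟨S, w, hw⟩ := hG
  obtain ⟨a, ha, hamin⟩ := R.exists_min_image w hR
  obtain ⟨b, hb, hbmax⟩ := R.exists_max_image w hR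
  by_cases h : w a + w b ≤ S
  · refine ⟨a, ha, Or.inl fun u hu hadj => ?_⟩
    have := (hw a u hadj.ne).1 hadj
    linarith [hbmax u hu]
  · refine ⟨b, hb, Or.inr fun u hu hne => (hw b u hne.symm).2 ?_⟩
    linarith [hamin u hu]

variable (G) [DecidableRel G.Adj]

def SolvesShiftedEigen (μ c : ℝ) (R : Finset V) (y : V → ℝ) : Prop :=
  ∀ v ∈ R, ∑ u ∈ R with G.Adj v u, y u + c = μ * y v

variable {G} {μ c : ℝ} {R : Finset V} {y : V → ℝ} {v : V}

theorem solvesShiftedEigen_univ_of_mulVec_eq [Fintype V]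
    (hy : (G.adjMatrix ℝ).mulVec y = μ • y) :
    G.SolvesShiftedEigen μ 0 univ y := fun v _ => by
  rw [add_zero, ← neighborFinset_eq_filter, ← adjMatrix_mulVec_apply, hy, Pi.smul_apply,
    smul_eq_mul]

variable [DecidableEq V]

theorem SolvesShiftedEigen.erase_of_isolated (h : G.SolvesShiftedEigen μ c R y) (hv : v ∈ R)
    (hiso : ∀ u ∈ R, ¬ G.Adj v u) :
    G.SolvesShiftedEigen μ c (R.erase v) y ∧ c = μ * y v := by
  refine ⟨fun u hu => ?_, ?_⟩
  · have hvu : v ∉ R.filter (G.Adj u) := fun h' =>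
      hiso u (mem_of_mem_erase hu) (mem_filter.1 h').2.symm
    rw [filter_erase, erase_eq_of_notMem hvu]
    exact h u (mem_of_mem_erase hu)
  · simpa [filter_false_of_mem hiso] using h v hv

theorem SolvesShiftedEigen.erase_of_dominating (h : G.SolvesShiftedEigen μ c R y) (hv : v ∈ R)
    (hdom : ∀ u ∈ R, u ≠ v → G.Adj v u) :
    G.SolvesShiftedEigen μ (c + y v) (R.erase v) y ∧ ∑ u ∈ R.erase v, y u + c = μ * y v := by
  refine ⟨fun u hu => ?_, ?_⟩
  · have hvu : v ∈ R.filter (G.Adj u) :=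
      mem_filter.2 ⟨hv, (hdom u (mem_of_mem_erase hu) (ne_of_mem_erase hu)).symm⟩
    rw [filter_erase, ← add_assoc, add_right_comm, sum_erase_add _ _ hvu]
    exact h u (mem_of_mem_erase hu)
  · have hfilter : R.filter (G.Adj v) = R.erase v := by
      ext u
      simp only [mem_filter, mem_erase]
      exact ⟨fun ⟨hu, hadj⟩ => ⟨hadj.ne.symm, hu⟩, fun ⟨hne, hu⟩ => ⟨hu, hdom u hu hne⟩⟩
    simpa only [hfilter] using h v hv

theorem IsThreshold.exists_sum_eq_mul_of_solvesShiftedEigen (hG : G.IsThreshold) (hμ : μ < -1)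
    (hμ' : μ ^ 2 + μ ≤ 1 / 4) (R : Finset V) :
    ∃ f ∈ pingPongRegion μ, ∀ c y, G.SolvesShiftedEigen μ c R y →
      ∑ v ∈ R, y v = f * c ∧ (c = 0 → ∀ v ∈ R, y v = 0) := by
  induction R using Finset.strongInduction with
  | H R ih =>
  rcases R.eq_empty_or_nonempty with rfl | hR
  · exact ⟨0, Or.inl rfl, fun _ _ _ => by simp⟩
  obtain ⟨v, hv, hiso | hdom⟩ := hG.exists_isolated_or_dominating hR
  · obtain ⟨f, hf, hsol⟩ := ih _ (erase_ssubset hv)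
    refine ⟨f + μ⁻¹, add_inv_mem_pingPongRegion hμ hμ' hf, fun c y h => ?_⟩
    obtain ⟨h', hcv⟩ := h.erase_of_isolated hv hiso
    obtain ⟨hsum, hzero⟩ := hsol c y h'
    have hyv : y v = c * μ⁻¹ := by rw [hcv, mul_comm μ, mul_inv_cancel_right₀ (by linarith)]
    refine ⟨by rw [← sum_erase_add _ _ hv, hsum, hyv]; ring, fun hc u hu => ?_⟩
    rcases eq_or_ne u v with rfl | huv
    · simp [hyv, hc]
    · exact hzero hc u (mem_erase.2 ⟨huv, hu⟩)
  · obtain ⟨f, hf, hsol⟩ := ih _ (erase_ssubset hv)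
    refine ⟨_, moebius_mem_pingPongRegion hμ hμ' hf, fun c y h => ?_⟩
    obtain ⟨h', hdv⟩ := h.erase_of_dominating hv hdom
    obtain ⟨hsum, hzero⟩ := hsol _ y h'
    have hne : μ - f ≠ 0 := sub_ne_zero.2 (ne_of_mem_pingPongRegion hμ hμ' hf).symm
    have hyv : y v = (1 + f) * c / (μ - f) := by
      rw [eq_div_iff hne]; linear_combination hsum - hdv
    refine ⟨?_, fun hc u hu => ?_⟩
    · rw [← sum_erase_add _ _ hv, hsum, hyv]; field_simp; ring
    · have hyv0 : y v = 0 := by simp [hyv, hc]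
      rcases eq_or_ne u v with rfl | huv
      · exact hyv0
      · exact hzero (by rw [hc, hyv0, add_zero]) u (mem_erase.2 ⟨huv, hu⟩)

end SimpleGraph

theorem threshold_eigenvalue_lt_neg_one_lt {V : Type*} [Fintype V]
    (G : SimpleGraph V) (hG : G.IsThreshold) (μ : ℝ) (hμ : G.HasAdjEigenvalue μ)
    (hlt : μ < -1) : μ < (-1 - Real.sqrt 2) / 2 := by
  classical
  by_contra hge
  have hμ' : μ ^ 2 + μ ≤ 1 / 4 := sq_add_self_le_quarter (not_lt.1 hge) (by linarith)
  obtain ⟨x, hx0, hx⟩ := hμ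
  obtain ⟨f, -, hsol⟩ := hG.exists_sum_eq_mul_of_solvesShiftedEigen hlt hμ' univ
  exact hx0 <| funext fun v =>
    (hsol 0 x (SimpleGraph.solvesShiftedEigen_univ_of_mulVec_eq hx)).2 rfl v (mem_univ v)
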